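/- arXiv:2303.16786 — 4 statements merged into one kernel-verified Lean document; each statement's English description precedes it below -/
import Mathlib

section
/- Let f : ℝⁿ → ℝ be μ-strongly convex and L-smooth, let X ⊆ ℝⁿ be nonempty, closed and convex, 0 < t ≤ 1/L, T(x) = proj_X(x - t∇f(x)), and x* the minimizer of f over X. Then the projected gradient iterates x^{k+1} = T(x^k) satisfy f(x^k) - f(x*) ≤ (1/(2t))(1 - tμ)^k ‖x^0 - x*‖² for all k ≥ 1. -/
/-!
Convexity of `X` turns the projection step into the variational inequality
`⟪x - t • ∇f x - x⁺, y - x⁺⟫ ≤ 0` for all `y ∈ X`. Combined with the smoothness upper bound at `x⁺`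
and the strong-convexity lower bound at `y`, both expanded around `x`, it gives the one-step
inequality `f x⁺ - f y ≤ ((1 - t μ) ‖x - y‖² - ‖x⁺ - y‖²) / (2 t)`, the slack
`(1 - L t) ‖x - x⁺‖² ≥ 0` being dropped. For `y = x*` the left side is nonnegative, so the squared
distance to `x*` contracts by the factor `1 - t μ` at each step; feeding this back into the one-step
inequality yields the rate.
-/

open scoped RealInnerProductSpace

/-- `p` is the Euclidean projection of `z` onto the set `X`. -/
def IsProj {n : ℕ} (X : Set (EuclideanSpace ℝ (Fin n))) (z p : EuclideanSpace ℝ (Fin n)) : Prop :=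
  p ∈ X ∧ ∀ y ∈ X, ‖p - z‖ ≤ ‖y - z‖

theorem IsProj.inner_sub_le_zero {n : ℕ} {X : Set (EuclideanSpace ℝ (Fin n))} (hX : Convex ℝ X)
    {z p : EuclideanSpace ℝ (Fin n)} (hp : IsProj X z p) :
    ∀ y ∈ X, ⟪z - p, y - p⟫ ≤ 0 := by
  have : Nonempty X := ⟨⟨p, hp.1⟩⟩
  refine (norm_eq_iInf_iff_real_inner_le_zero hX hp.1).mp (le_antisymm ?_ ?_)
  · exact le_ciInf fun y ↦ by simpa only [norm_sub_rev z] using hp.2 y y.2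
  · have hbdd : BddBelow (Set.range fun w : X ↦ ‖z - w‖) :=
      ⟨0, Set.forall_mem_range.2 fun _ ↦ norm_nonneg _⟩
    exact ciInf_le hbdd ⟨p, hp.1⟩

section ProjectedGradient

variable {E : Type*} [NormedAddCommGroup E] [InnerProductSpace ℝ E]

theorem le_of_strongConvexity_of_smoothness [Nontrivial E] {f : E → ℝ} {g : E → E} {μ L : ℝ}
    (hsc : ∀ x y, μ / 2 * ‖x - y‖ ^ 2 ≤ f x - f y - ⟪g y, x - y⟫)
    (hsm : ∀ x y, f x - f y - ⟪g y, x - y⟫ ≤ L / 2 * ‖x - y‖ ^ 2) : μ ≤ L := by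
  obtain ⟨v, hv⟩ := exists_ne (0 : E)
  have hpos : 0 < ‖v - 0‖ ^ 2 := by rw [sub_zero]; positivity
  have := (hsc v 0).trans (hsm v 0)
  nlinarith

theorem projGrad_step_le {f : E → ℝ} {g : E → E} {μ L t : ℝ} (ht : 0 < t) (hLt : L * t ≤ 1)
    (hsc : ∀ x y, μ / 2 * ‖x - y‖ ^ 2 ≤ f x - f y - ⟪g y, x - y⟫)
    (hsm : ∀ x y, f x - f y - ⟪g y, x - y⟫ ≤ L / 2 * ‖x - y‖ ^ 2)
    {a p y : E} (hvi : ⟪a - t • g a - p, y - p⟫ ≤ 0) :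
    f p - f y ≤ 1 / (2 * t) * ((1 - t * μ) * ‖a - y‖ ^ 2 - ‖p - y‖ ^ 2) := by
  have hvi' : ⟪a - p, y - p⟫ ≤ t * ⟪g a, y - p⟫ := by
    rw [sub_right_comm, inner_sub_left, real_inner_smul_left] at hvi
    linarith
  have hgap : f p - f y ≤ L / 2 * ‖a - p‖ ^ 2 - μ / 2 * ‖a - y‖ ^ 2 - ⟪g a, y - p⟫ := by
    have hsplit : ⟪g a, p - a⟫ - ⟪g a, y - a⟫ = -⟪g a, y - p⟫ := by
      rw [← inner_sub_right, ← inner_neg_right, sub_sub_sub_cancel_right, neg_sub]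
    have hsmooth := hsm p a
    have hconvex := hsc y a
    rw [norm_sub_rev p] at hsmooth
    rw [norm_sub_rev y] at hconvex
    linarith
  have hpolar : 2 * ⟪a - p, y - p⟫ = ‖a - p‖ ^ 2 + ‖p - y‖ ^ 2 - ‖a - y‖ ^ 2 := by
    have := norm_sub_sq_real (a - p) (y - p)
    rw [sub_sub_sub_cancel_right, norm_sub_rev y] at this
    linarith
  have hA : 0 ≤ (1 - L * t) * ‖a - p‖ ^ 2 := mul_nonneg (by linarith) (by positivity)
  rw [one_div_mul_eq_div, le_div_iff₀ (by positivity)]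
  nlinarith

theorem sq_norm_sub_le_of_projGrad_step {f : E → ℝ} {g : E → E} {μ L t : ℝ} (ht : 0 < t)
    (hLt : L * t ≤ 1)
    (hsc : ∀ x y, μ / 2 * ‖x - y‖ ^ 2 ≤ f x - f y - ⟪g y, x - y⟫)
    (hsm : ∀ x y, f x - f y - ⟪g y, x - y⟫ ≤ L / 2 * ‖x - y‖ ^ 2)
    {a p y : E} (hvi : ⟪a - t • g a - p, y - p⟫ ≤ 0) (hy : f y ≤ f p) :
    ‖p - y‖ ^ 2 ≤ (1 - t * μ) * ‖a - y‖ ^ 2 := by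
  have h := projGrad_step_le ht hLt hsc hsm hvi
  rw [one_div_mul_eq_div, le_div_iff₀ (by positivity)] at h
  nlinarith

end ProjectedGradient

theorem stmt1_general {n : ℕ} (f : EuclideanSpace ℝ (Fin n) → ℝ)
    (g : EuclideanSpace ℝ (Fin n) → EuclideanSpace ℝ (Fin n))
    (X : Set (EuclideanSpace ℝ (Fin n)))
    (hXcv : Convex ℝ X)
    (μ L t : ℝ) (ht : 0 < t) (ht' : t ≤ 1 / L)
    (hsc : ∀ x y, μ / 2 * ‖x - y‖ ^ 2 ≤ f x - f y - ⟪g y, x - y⟫)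
    (hsm : ∀ x y, f x - f y - ⟪g y, x - y⟫ ≤ L / 2 * ‖x - y‖ ^ 2)
    (xs : EuclideanSpace ℝ (Fin n)) (hxsX : xs ∈ X) (hxs : ∀ y ∈ X, f xs ≤ f y)
    (x : ℕ → EuclideanSpace ℝ (Fin n))
    (hstep : ∀ k, IsProj X (x k - t • g (x k)) (x (k + 1))) :
    ∀ k ≥ 1, f (x k) - f xs ≤ 1 / (2 * t) * (1 - t * μ) ^ k * ‖x 0 - xs‖ ^ 2 := by
  have hL : 0 < L := one_div_pos.mp (ht.trans_le ht')
  have hLt : L * t ≤ 1 := by rwa [le_div_iff₀ hL, mul_comm] at ht'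
  have hvi k : ⟪x k - t • g (x k) - x (k + 1), xs - x (k + 1)⟫ ≤ 0 :=
    (hstep k).inner_sub_le_zero hXcv xs hxsX
  rcases subsingleton_or_nontrivial (EuclideanSpace ℝ (Fin n)) with _ | _
  · intro k _
    simp [Subsingleton.elim (x k) xs, Subsingleton.elim (x 0) xs]
  have hr : 0 ≤ 1 - t * μ := by nlinarith [le_of_strongConvexity_of_smoothness hsc hsm]
  have hdist k : ‖x k - xs‖ ^ 2 ≤ (1 - t * μ) ^ k * ‖x 0 - xs‖ ^ 2 :=
    le_geom (u := fun k ↦ ‖x k - xs‖ ^ 2) hr k fun j _ ↦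
      sq_norm_sub_le_of_projGrad_step ht hLt hsc hsm (hvi j) (hxs _ (hstep j).1)
  rintro (_ | k) hk
  · omega
  calc f (x (k + 1)) - f xs
      ≤ 1 / (2 * t) * ((1 - t * μ) * ‖x k - xs‖ ^ 2 - ‖x (k + 1) - xs‖ ^ 2) :=
        projGrad_step_le ht hLt hsc hsm (hvi k)
    _ ≤ 1 / (2 * t) * ((1 - t * μ) * ((1 - t * μ) ^ k * ‖x 0 - xs‖ ^ 2)) := by
        gcongr
        linarith [mul_le_mul_of_nonneg_left (hdist k) hr, sq_nonneg ‖x (k + 1) - xs‖]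
    _ = 1 / (2 * t) * (1 - t * μ) ^ (k + 1) * ‖x 0 - xs‖ ^ 2 := by ring

theorem stmt1 {n : ℕ} (f : EuclideanSpace ℝ (Fin n) → ℝ)
    (g : EuclideanSpace ℝ (Fin n) → EuclideanSpace ℝ (Fin n))
    (X : Set (EuclideanSpace ℝ (Fin n)))
    (hXne : X.Nonempty) (hXcl : IsClosed X) (hXcv : Convex ℝ X)
    (μ L t : ℝ) (hμ : 0 < μ) (hL : 0 < L) (ht : 0 < t) (ht' : t ≤ 1 / L)
    (hsc : ∀ x y, μ / 2 * ‖x - y‖ ^ 2 ≤ f x - f y - ⟪g y, x - y⟫)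
    (hsm : ∀ x y, f x - f y - ⟪g y, x - y⟫ ≤ L / 2 * ‖x - y‖ ^ 2)
    (xs : EuclideanSpace ℝ (Fin n)) (hxsX : xs ∈ X) (hxs : ∀ y ∈ X, f xs ≤ f y)
    (x : ℕ → EuclideanSpace ℝ (Fin n)) (hx0 : x 0 ∈ X)
    (hstep : ∀ k, IsProj X (x k - t • g (x k)) (x (k + 1))) :
    ∀ k ≥ 1, f (x k) - f xs ≤ 1 / (2 * t) * (1 - t * μ) ^ k * ‖x 0 - xs‖ ^ 2 :=
  stmt1_general f g X hXcv μ L t ht ht' hsc hsm xs hxsX hxs x hstep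
end

section
/- Let f : ℝⁿ → ℝ be convex and L-smooth, X ⊆ ℝⁿ nonempty closed convex, 0 < t ≤ 1/L, x ∈ X, and x⁺ = proj_X(x - ĝ) with t∇f(x) = ĝ + v. Then for every y ∈ X, f(x⁺) - f(y) ≤ (1/(2t))‖x - y‖² - (1/(2t))‖x⁺ - y‖² + (1/t)⟨v, x⁺ - y⟩. -/
/-!
Projecting `x - ĝ` onto `X` gives the variational inequality `⟪x - ĝ - x⁺, y - x⁺⟫ ≤ 0`, i.e.
`t ⟪∇f x, x⁺ - y⟫ ≤ ⟪x - x⁺ + v, x⁺ - y⟫`. Convexity at `x` (towards `y`) and `L`-smoothness at `x`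
(towards `x⁺`) bound `f x⁺ - f y` by `⟪∇f x, x⁺ - y⟫ + (L/2) ‖x⁺ - x‖²`, and `L ≤ 1/t` gives
`f x⁺ - f y ≤ (1/t) ⟪x - x⁺ + v, x⁺ - y⟫ + (1/(2t)) ‖x - x⁺‖²`. The three-point identity
`⟪x - x⁺, x⁺ - y⟫ + ‖x - x⁺‖²/2 = ‖x - y‖²/2 - ‖x⁺ - y‖²/2` turns this into the claim.
-/

open scoped RealInnerProductSpace

section InnerProductSpace

variable {E : Type*} [NormedAddCommGroup E] [InnerProductSpace ℝ E]

theorem real_inner_sub_le_zero_of_forall_norm_sub_le {X : Set E} (hX : Convex ℝ X) {z p : E}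
    (hp : p ∈ X) (hmin : ∀ y ∈ X, ‖p - z‖ ≤ ‖y - z‖) {y : E} (hy : y ∈ X) :
    ⟪z - p, y - p⟫ ≤ 0 := by
  have : Nonempty X := ⟨⟨p, hp⟩⟩
  have hinf : ‖z - p‖ = ⨅ w : X, ‖z - w‖ :=
    le_antisymm (le_ciInf fun w => by simpa only [norm_sub_rev z] using hmin w w.2)
      (ciInf_le (f := fun w : X => ‖z - w‖)
        ⟨0, by rintro _ ⟨w, rfl⟩; exact norm_nonneg _⟩ ⟨p, hp⟩)
  exact (norm_eq_iInf_iff_real_inner_le_zero hX hp).mp hinf y hy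

theorem real_inner_sub_add_half_norm_sq (x p y : E) :
    ⟪x - p, p - y⟫ + ‖x - p‖ ^ 2 / 2 = ‖x - y‖ ^ 2 / 2 - ‖p - y‖ ^ 2 / 2 := by
  rw [show x - y = (x - p) + (p - y) by abel, norm_add_sq_real]
  ring

variable {f : E → ℝ} {g : E → E} {L : ℝ}

theorem sub_le_inner_add_of_convex_of_smooth (hcv : ∀ x y, 0 ≤ f x - f y - ⟪g y, x - y⟫)
    (hsm : ∀ x y, f x - f y - ⟪g y, x - y⟫ ≤ L / 2 * ‖x - y‖ ^ 2) (x y z : E) :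
    f z - f y ≤ ⟪g x, z - y⟫ + L / 2 * ‖z - x‖ ^ 2 := by
  have hsplit : ⟪g x, z - y⟫ = ⟪g x, z - x⟫ - ⟪g x, y - x⟫ := by
    rw [← inner_sub_right, sub_sub_sub_cancel_right]
  linarith [hcv y x, hsm z x]

theorem sub_le_of_inexact_proj_gradient_step (hcv : ∀ x y, 0 ≤ f x - f y - ⟪g y, x - y⟫)
    (hsm : ∀ x y, f x - f y - ⟪g y, x - y⟫ ≤ L / 2 * ‖x - y‖ ^ 2) {t : ℝ} (ht : 0 < t)
    (hLt : L ≤ 1 / t) {x gh v p y : E} (hv : t • g x = gh + v)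
    (hvar : ⟪x - gh - p, y - p⟫ ≤ 0) :
    f p - f y ≤ 1 / t * ⟪x - p + v, p - y⟫ + 1 / (2 * t) * ‖x - p‖ ^ 2 := by
  have hstep : t * ⟪g x, p - y⟫ ≤ ⟪x - p + v, p - y⟫ := by
    rw [eq_sub_of_add_eq hv.symm] at hvar
    have hexpand :
        ⟪x - (t • g x - v) - p, y - p⟫ = t * ⟪g x, p - y⟫ - ⟪x - p + v, p - y⟫ := by
      simp only [inner_sub_left, inner_sub_right, inner_add_left, real_inner_smul_left]
      ring
    linarith
  have hgrad : ⟪g x, p - y⟫ ≤ 1 / t * ⟪x - p + v, p - y⟫ := by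
    rw [one_div, ← div_eq_inv_mul, le_div_iff₀ ht, mul_comm]
    exact hstep
  have hquad : L / 2 * ‖p - x‖ ^ 2 ≤ 1 / (2 * t) * ‖x - p‖ ^ 2 := by
    rw [norm_sub_rev, show 1 / (2 * t) = 1 / t / 2 by ring]
    gcongr
  linarith [sub_le_inner_add_of_convex_of_smooth hcv hsm x y p]

end InnerProductSpace

theorem stmt7_general {n : ℕ} (f : EuclideanSpace ℝ (Fin n) → ℝ)
    (g : EuclideanSpace ℝ (Fin n) → EuclideanSpace ℝ (Fin n))
    (X : Set (EuclideanSpace ℝ (Fin n)))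
    (hXcv : Convex ℝ X)
    (L t : ℝ) (ht : 0 < t) (ht' : t ≤ 1 / L)
    (hcv : ∀ x y, 0 ≤ f x - f y - ⟪g y, x - y⟫)
    (hsm : ∀ x y, f x - f y - ⟪g y, x - y⟫ ≤ L / 2 * ‖x - y‖ ^ 2)
    (x gh v xp : EuclideanSpace ℝ (Fin n))
    (hproj : IsProj X (x - gh) xp)
    (hv : t • g x = gh + v) :
    ∀ y ∈ X, f xp - f y ≤ 1 / (2 * t) * ‖x - y‖ ^ 2 - 1 / (2 * t) * ‖xp - y‖ ^ 2
      + 1 / t * ⟪v, xp - y⟫ := by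
  intro y hy
  have hL : 0 < L := one_div_pos.mp (ht.trans_le ht')
  have hLt : L ≤ 1 / t := by rwa [le_one_div hL ht]
  have hvar := real_inner_sub_le_zero_of_forall_norm_sub_le hXcv hproj.1 hproj.2 hy
  have hfund := sub_le_of_inexact_proj_gradient_step hcv hsm ht hLt hv hvar
  have hid := real_inner_sub_add_half_norm_sq x xp y
  rw [inner_add_left] at hfund
  have hscale : 1 / t * ⟪x - xp, xp - y⟫ + 1 / (2 * t) * ‖x - xp‖ ^ 2
      = 1 / (2 * t) * ‖x - y‖ ^ 2 - 1 / (2 * t) * ‖xp - y‖ ^ 2 := by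
    rw [show (1 / (2 * t)) = 1 / t * (1 / 2) by ring]
    linear_combination (1 / t) * hid
  linarith

theorem stmt7 {n : ℕ} (f : EuclideanSpace ℝ (Fin n) → ℝ)
    (g : EuclideanSpace ℝ (Fin n) → EuclideanSpace ℝ (Fin n))
    (X : Set (EuclideanSpace ℝ (Fin n)))
    (hXne : X.Nonempty) (hXcl : IsClosed X) (hXcv : Convex ℝ X)
    (L t : ℝ) (hL : 0 < L) (ht : 0 < t) (ht' : t ≤ 1 / L)
    (hcv : ∀ x y, 0 ≤ f x - f y - ⟪g y, x - y⟫)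
    (hsm : ∀ x y, f x - f y - ⟪g y, x - y⟫ ≤ L / 2 * ‖x - y‖ ^ 2)
    (x gh v xp : EuclideanSpace ℝ (Fin n)) (hxX : x ∈ X)
    (hproj : IsProj X (x - gh) xp)
    (hv : t • g x = gh + v) :
    ∀ y ∈ X, f xp - f y ≤ 1 / (2 * t) * ‖x - y‖ ^ 2 - 1 / (2 * t) * ‖xp - y‖ ^ 2
      + 1 / t * ⟪v, xp - y⟫ :=
  stmt7_general f g X hXcv L t ht ht' hcv hsm x gh v xp hproj hv
end

section
/- Let f : ℝⁿ → ℝ be μ-strongly convex and L-smooth, X nonempty closed convex, x* = argmin_{x∈X} f(x), 0 < t ≤ 1/L, and T(x) = proj_X(x - t∇f(x)). Let T' := (1/t + L)/μ. Then for every x ∈ X, ‖T(x) - x*‖ ≤ T' ‖x - T(x)‖. -/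
/-!
Strong monotonicity of the gradient gives `μ ‖Tx - x*‖² ≤ ⟪∇f(Tx) - ∇f(x*), Tx - x*⟫`. Split the
right-hand side through `∇f(x)`: the term `⟪∇f(Tx) - ∇f(x), Tx - x*⟫` is at most
`L ‖x - Tx‖ ‖Tx - x*‖` because a convex `L`-smooth function has an `L`-Lipschitz gradient; the
variational inequality of the projection bounds `⟪∇f(x), Tx - x*⟫` by `⟪x - Tx, Tx - x*⟫ / t`; and
`⟪∇f(x*), Tx - x*⟫ ≥ 0` is first-order optimality of `x*` on `X`. Cauchy–Schwarz and division by
`‖Tx - x*‖` finish.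
-/

open scoped RealInnerProductSpace

open Set Filter Topology

section

variable {E : Type*} [NormedAddCommGroup E] [InnerProductSpace ℝ E]

def bregman (f : E → ℝ) (g : E → E) (x y : E) : ℝ :=
  f x - f y - ⟪g y, x - y⟫

variable {f : E → ℝ} {g : E → E}

theorem bregman_add_bregman_swap (x y : E) :
    bregman f g x y + bregman f g y x = ⟪g x - g y, x - y⟫ := by
  simp only [bregman]
  rw [inner_sub_left, ← neg_sub x y, inner_neg_right]
  ring

theorem mul_norm_sub_sq_le_inner_of_le_bregman {μ : ℝ}
    (hsc : ∀ x y, μ / 2 * ‖x - y‖ ^ 2 ≤ bregman f g x y) (x y : E) :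
    μ * ‖x - y‖ ^ 2 ≤ ⟪g x - g y, x - y⟫ := by
  have hxy := hsc x y
  have hyx := hsc y x
  rw [norm_sub_rev y x] at hyx
  rw [← bregman_add_bregman_swap]
  linarith

variable {L : ℝ}

theorem inner_sub_sub_le_bregman_of_smooth (hcvx : ∀ x y, 0 ≤ bregman f g x y)
    (hsm : ∀ x y, bregman f g x y ≤ L / 2 * ‖x - y‖ ^ 2) (a b v : E) :
    ⟪g b - g a, v⟫ - L / 2 * ‖v‖ ^ 2 ≤ bregman f g a b := by
  have h1 := hsm (a + v) a
  have h2 := hcvx (a + v) b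
  simp only [bregman, add_sub_cancel_left, add_sub_right_comm a v b, inner_add_right] at h1 h2 ⊢
  rw [inner_sub_left]
  linarith

theorem norm_sub_sq_div_le_bregman_of_smooth (hcvx : ∀ x y, 0 ≤ bregman f g x y)
    (hsm : ∀ x y, bregman f g x y ≤ L / 2 * ‖x - y‖ ^ 2) (hL : 0 < L) (a b : E) :
    ‖g a - g b‖ ^ 2 / (2 * L) ≤ bregman f g a b := by
  have h := inner_sub_sub_le_bregman_of_smooth hcvx hsm a b (L⁻¹ • (g b - g a))
  rw [real_inner_smul_right, real_inner_self_eq_norm_sq, norm_smul, mul_pow, norm_inv,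
    Real.norm_of_nonneg hL.le, norm_sub_rev] at h
  convert h using 1
  field_simp
  ring

theorem norm_sub_le_of_smooth (hcvx : ∀ x y, 0 ≤ bregman f g x y)
    (hsm : ∀ x y, bregman f g x y ≤ L / 2 * ‖x - y‖ ^ 2) (hL : 0 < L) (a b : E) :
    ‖g a - g b‖ ≤ L * ‖a - b‖ := by
  have hab := norm_sub_sq_div_le_bregman_of_smooth hcvx hsm hL a b
  have hba := norm_sub_sq_div_le_bregman_of_smooth hcvx hsm hL b a
  rw [norm_sub_rev (g b)] at hba
  have hcoco : ‖g a - g b‖ ^ 2 ≤ L * ⟪g a - g b, a - b⟫ := by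
    rw [← bregman_add_bregman_swap]
    rw [div_le_iff₀ (by positivity)] at hab hba
    linarith
  have hcs := real_inner_le_norm (g a - g b) (a - b)
  rcases (norm_nonneg (g a - g b)).eq_or_lt with h0 | h0
  · rw [← h0]
    positivity
  · nlinarith

theorem inner_nonneg_of_isMinOn_of_le_quadratic {φ : E → ℝ} {X : Set E} {a : E}
    (hX : Convex ℝ X) (ha : a ∈ X) (hmin : IsMinOn φ X a) (G : E) (K : ℝ)
    (hup : ∀ y, φ y ≤ φ a + ⟪G, y - a⟫ + K * ‖y - a‖ ^ 2) {y : E} (hy : y ∈ X) :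
    0 ≤ ⟪G, y - a⟫ := by
  have hsegment : ∀ s ∈ Ioc (0 : ℝ) 1, 0 ≤ ⟪G, y - a⟫ + s * (K * ‖y - a‖ ^ 2) := by
    rintro s ⟨hs0, hs1⟩
    have hle := (isMinOn_iff.mp hmin _ (hX.add_smul_sub_mem ha hy ⟨hs0.le, hs1⟩)).trans (hup _)
    rw [add_sub_cancel_left, real_inner_smul_right, norm_smul, mul_pow,
      Real.norm_of_nonneg hs0.le] at hle
    refine nonneg_of_mul_nonneg_right ?_ hs0
    linarith
  have hlim : Tendsto (fun s : ℝ => ⟪G, y - a⟫ + s * (K * ‖y - a‖ ^ 2)) (𝓝[>] 0)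
      (𝓝 ⟪G, y - a⟫) := by
    refine tendsto_nhdsWithin_of_tendsto_nhds ?_
    simpa using ((continuous_id.mul continuous_const).const_add ⟪G, y - a⟫).tendsto (0 : ℝ)
  exact ge_of_tendsto hlim (eventually_of_mem (Ioc_mem_nhdsGT one_pos) hsegment)

theorem norm_sub_le_of_inner_bounds {μ t : ℝ} (hμ : 0 < μ) (hL : 0 ≤ L) (ht : 0 < t) {x y z : E}
    (hmono : μ * ‖y - z‖ ^ 2 ≤ ⟪g y - g z, y - z⟫) (hlip : ‖g y - g x‖ ≤ L * ‖x - y‖)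
    (hstep : t * ⟪g x, y - z⟫ ≤ ⟪x - y, y - z⟫) (hopt : 0 ≤ ⟪g z, y - z⟫) :
    ‖y - z‖ ≤ (1 / t + L) / μ * ‖x - y‖ := by
  have hsplit : ⟪g y - g z, y - z⟫ = ⟪g y - g x, y - z⟫ + ⟪g x, y - z⟫ - ⟪g z, y - z⟫ := by
    simp only [inner_sub_left]
    ring
  have hcs₁ := (real_inner_le_norm (g y - g x) (y - z)).trans
    (mul_le_mul_of_nonneg_right hlip (norm_nonneg (y - z)))
  have hcs₂ := real_inner_le_norm (x - y) (y - z)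
  have hkey : t * μ * ‖y - z‖ ^ 2 ≤ (1 + t * L) * ‖x - y‖ * ‖y - z‖ :=
    calc t * μ * ‖y - z‖ ^ 2 ≤ t * ⟪g y - g z, y - z⟫ := by
          rw [mul_assoc]; exact mul_le_mul_of_nonneg_left hmono ht.le
      _ ≤ t * ⟪g y - g x, y - z⟫ + ⟪x - y, y - z⟫ := by
          rw [hsplit]; nlinarith
      _ ≤ (1 + t * L) * ‖x - y‖ * ‖y - z‖ := by nlinarith
  rcases (norm_nonneg (y - z)).eq_or_lt with h0 | h0
  · rw [← h0]
    positivity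
  · have hdiv : t * μ * ‖y - z‖ ≤ (1 + t * L) * ‖x - y‖ :=
      le_of_mul_le_mul_right (by nlinarith) h0
    rw [div_mul_eq_mul_div, le_div_iff₀ hμ, ← mul_le_mul_iff_right₀ ht]
    field_simp
    linarith

end

theorem IsProj.inner_sub_nonpos {n : ℕ} {X : Set (EuclideanSpace ℝ (Fin n))}
    {z p : EuclideanSpace ℝ (Fin n)} (hp : IsProj X z p) (hX : Convex ℝ X)
    {w : EuclideanSpace ℝ (Fin n)} (hw : w ∈ X) : ⟪z - p, w - p⟫ ≤ 0 := by
  have hmin : IsMinOn (fun y => ‖y - z‖ ^ 2) X p :=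
    isMinOn_iff.mpr fun y hy => pow_le_pow_left₀ (norm_nonneg _) (hp.2 y hy) 2
  have hup (y : EuclideanSpace ℝ (Fin n)) :
      ‖y - z‖ ^ 2 ≤ ‖p - z‖ ^ 2 + ⟪(2 : ℝ) • (p - z), y - p⟫ + 1 * ‖y - p‖ ^ 2 := by
    rw [← sub_add_sub_cancel y p z, norm_add_sq_real, real_inner_smul_left, real_inner_comm]
    linarith
  have h := inner_nonneg_of_isMinOn_of_le_quadratic hX hp.1 hmin _ _ hup hw
  rw [real_inner_smul_left, ← neg_sub z p, inner_neg_left] at h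
  linarith

theorem stmt10_general {n : ℕ} (f : EuclideanSpace ℝ (Fin n) → ℝ)
    (g : EuclideanSpace ℝ (Fin n) → EuclideanSpace ℝ (Fin n))
    (X : Set (EuclideanSpace ℝ (Fin n)))
    (hXcv : Convex ℝ X)
    (μ L t : ℝ) (hμ : 0 < μ) (hL : 0 < L) (ht : 0 < t)
    (hsc : ∀ x y, μ / 2 * ‖x - y‖ ^ 2 ≤ f x - f y - ⟪g y, x - y⟫)
    (hsm : ∀ x y, f x - f y - ⟪g y, x - y⟫ ≤ L / 2 * ‖x - y‖ ^ 2)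
    (xs : EuclideanSpace ℝ (Fin n)) (hxsX : xs ∈ X) (hxs : ∀ y ∈ X, f xs ≤ f y) :
    ∀ x ∈ X, ∀ Tx : EuclideanSpace ℝ (Fin n), IsProj X (x - t • g x) Tx →
      ‖Tx - xs‖ ≤ (1 / t + L) / μ * ‖x - Tx‖ := by
  intro x _ Tx hTx
  have hopt : 0 ≤ ⟪g xs, Tx - xs⟫ :=
    inner_nonneg_of_isMinOn_of_le_quadratic hXcv hxsX (isMinOn_iff.mpr hxs) (g xs) (L / 2)
      (fun y => by linarith [hsm y xs]) hTx.1
  have hstep : t * ⟪g x, Tx - xs⟫ ≤ ⟪x - Tx, Tx - xs⟫ := by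
    have h := hTx.inner_sub_nonpos hXcv hxsX
    rw [sub_right_comm, ← neg_sub Tx xs, inner_neg_right, inner_sub_left,
      real_inner_smul_left] at h
    linarith
  have hcvx : ∀ x y, 0 ≤ bregman f g x y := fun x y =>
    (by positivity : (0 : ℝ) ≤ μ / 2 * ‖x - y‖ ^ 2).trans (hsc x y)
  have hlip := norm_sub_le_of_smooth hcvx hsm hL Tx x
  rw [norm_sub_rev Tx x] at hlip
  exact norm_sub_le_of_inner_bounds hμ hL.le ht (mul_norm_sub_sq_le_inner_of_le_bregman hsc Tx xs)
    hlip hstep hopt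

theorem stmt10 {n : ℕ} (f : EuclideanSpace ℝ (Fin n) → ℝ)
    (g : EuclideanSpace ℝ (Fin n) → EuclideanSpace ℝ (Fin n))
    (X : Set (EuclideanSpace ℝ (Fin n)))
    (hXne : X.Nonempty) (hXcl : IsClosed X) (hXcv : Convex ℝ X)
    (μ L t : ℝ) (hμ : 0 < μ) (hL : 0 < L) (ht : 0 < t) (ht' : t ≤ 1 / L)
    (hsc : ∀ x y, μ / 2 * ‖x - y‖ ^ 2 ≤ f x - f y - ⟪g y, x - y⟫)
    (hsm : ∀ x y, f x - f y - ⟪g y, x - y⟫ ≤ L / 2 * ‖x - y‖ ^ 2)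
    (xs : EuclideanSpace ℝ (Fin n)) (hxsX : xs ∈ X) (hxs : ∀ y ∈ X, f xs ≤ f y) :
    ∀ x ∈ X, ∀ Tx : EuclideanSpace ℝ (Fin n), IsProj X (x - t • g x) Tx →
      ‖Tx - xs‖ ≤ (1 / t + L) / μ * ‖x - Tx‖ :=
  stmt10_general f g X hXcv μ L t hμ hL ht hsc hsm xs hxsX hxs
end

section
/- Let f be μ-strongly convex and L-smooth, X nonempty closed convex, x* = argmin_{x∈X} f(x), 0 < t ≤ 1/L, T' = (1/t + L)/μ. Suppose x ∈ X and x⁺ = proj_X(x - ĝ) with t∇f(x) = ĝ + v, ‖v‖ ≤ Ω, and additionally ‖x - T(x)‖ ≤ δ, ‖x⁺ - T(x)‖ ≤ ω, ‖x - x⁺‖ ≤ Θ, where T(x) = proj_X(x - t∇f(x)). Then f(x⁺) - f(x*) ≤ (1/t)((Θ + Ω)(ω + δT') + Θ²/2). -/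
/-!
The exact step `T x` satisfies the variational inequality of the projection, and `x*` satisfies
Fermat's rule `⟪g x*, y - x*⟫ ≥ 0` on `X`. Combined with strong monotonicity and `L`-Lipschitz
continuity of `g`, they give `μ ‖T x - x*‖ ≤ (1/t + L) ‖x - T x‖`, hence
`‖x⁺ - x*‖ ≤ ω + δ T'`. The variational inequality of the inexact step together with the descent
lemma gives `f x⁺ - f x* ≤ (1/t) ⟪(x - x⁺) + v, x⁺ - x*⟫ + ‖x - x⁺‖² / (2t)`, and Cauchy–Schwarz
finishes. Lipschitz continuity of `g` follows from the lower bound `‖g a - g b‖² / (2L)` on the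
Bregman divergence `f a - f b - ⟪g b, a - b⟫`.
-/

open scoped RealInnerProductSpace

open Asymptotics Filter

theorem IsProj.real_inner_sub_le_zero {n : ℕ} {X : Set (EuclideanSpace ℝ (Fin n))}
    {z p y : EuclideanSpace ℝ (Fin n)} (hp : IsProj X z p) (hX : Convex ℝ X) (hy : y ∈ X) :
    ⟪z - p, y - p⟫ ≤ 0 := by
  have : Nonempty X := ⟨⟨p, hp.1⟩⟩
  have hbdd : BddBelow (Set.range fun w : X => ‖z - (w : EuclideanSpace ℝ (Fin n))‖) :=
    ⟨0, by rintro _ ⟨w, rfl⟩; exact norm_nonneg _⟩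
  have hinf : ‖z - p‖ = ⨅ w : X, ‖z - w‖ := by
    refine le_antisymm (le_ciInf fun w => ?_) (ciInf_le hbdd ⟨p, hp.1⟩)
    rw [norm_sub_rev z p, norm_sub_rev z]
    exact hp.2 w w.2
  exact (norm_eq_iInf_iff_real_inner_le_zero hX hp.1).1 hinf y hy

section InnerProductSpace

variable {E : Type*} [NormedAddCommGroup E] [InnerProductSpace ℝ E]

theorem hasFDerivAt_of_abs_sub_inner_le {f : E → ℝ} {g x : E} (C : ℝ)
    (h : ∀ y, |f y - f x - ⟪g, y - x⟫| ≤ C * ‖y - x‖ ^ 2) :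
    HasFDerivAt f (innerSL ℝ g) x := by
  rw [hasFDerivAt_iff_isLittleO]
  refine IsBigO.trans_isLittleO ?_ (isLittleO_pow_sub_sub x one_lt_two)
  refine IsBigO.of_bound C (Eventually.of_forall fun y => ?_)
  simpa only [innerSL_apply_apply, Real.norm_eq_abs, abs_pow, abs_norm] using h y

theorem IsMinOn.real_inner_sub_nonneg {f : E → ℝ} {X : Set E} {xs g y : E}
    (hmin : IsMinOn f X xs) (hf : HasFDerivAt f (innerSL ℝ g) xs) (hX : Convex ℝ X)
    (hxs : xs ∈ X) (hy : y ∈ X) : 0 ≤ ⟪g, y - xs⟫ :=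
  hmin.localize.hasFDerivWithinAt_nonneg hf.hasFDerivWithinAt
    (sub_mem_posTangentConeAt_of_segment_subset (hX.segment_subset hxs hy))

theorem mul_sq_norm_sub_le_inner_sub {f : E → ℝ} {g : E → E} {μ : ℝ}
    (hsc : ∀ x y, μ / 2 * ‖x - y‖ ^ 2 ≤ f x - f y - ⟪g y, x - y⟫) (a b : E) :
    μ * ‖a - b‖ ^ 2 ≤ ⟪g a - g b, a - b⟫ := by
  have hab := hsc a b
  have hba := hsc b a
  rw [norm_sub_rev] at hba
  have : ⟪g a, b - a⟫ = -⟪g a, a - b⟫ := by rw [← inner_neg_right, neg_sub]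
  rw [inner_sub_left]
  linarith

section Smooth

variable {f : E → ℝ} {g : E → E} {L : ℝ}
  (hcvx : ∀ x y, 0 ≤ f x - f y - ⟪g y, x - y⟫)
  (hsm : ∀ x y, f x - f y - ⟪g y, x - y⟫ ≤ L / 2 * ‖x - y‖ ^ 2)
include hcvx hsm

theorem hasFDerivAt_of_bregman_le (x : E) : HasFDerivAt f (innerSL ℝ (g x)) x :=
  hasFDerivAt_of_abs_sub_inner_le (|L| / 2) fun y => by
    have := mul_le_mul_of_nonneg_right (le_abs_self L) (sq_nonneg ‖y - x‖)
    exact abs_le.2 ⟨by nlinarith [hcvx y x, abs_nonneg L], by linarith [hsm y x]⟩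

/- Bound `f` at `a - (g a - g b) / L` from above by smoothness at `a` and from below by
convexity at `b`. -/
theorem sq_norm_sub_div_le_bregman (hL : 0 < L) (a b : E) :
    ‖g a - g b‖ ^ 2 / (2 * L) ≤ f a - f b - ⟪g b, a - b⟫ := by
  set d := g a - g b
  have hupper := hsm (a - L⁻¹ • d) a
  have hlower := hcvx (a - L⁻¹ • d) b
  rw [show a - L⁻¹ • d - a = -(L⁻¹ • d) by abel, norm_neg, norm_smul, inner_neg_right,
    real_inner_smul_right, Real.norm_eq_abs, abs_inv, abs_of_pos hL] at hupper
  rw [show a - L⁻¹ • d - b = (a - b) - L⁻¹ • d by abel, inner_sub_right,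
    real_inner_smul_right] at hlower
  have hd : ⟪g a, d⟫ - ⟪g b, d⟫ = ‖d‖ ^ 2 := by
    rw [← inner_sub_left, real_inner_self_eq_norm_sq]
  have : ‖d‖ ^ 2 / (2 * L) = L⁻¹ * (⟪g a, d⟫ - ⟪g b, d⟫) - L / 2 * (L⁻¹ * ‖d‖) ^ 2 := by
    rw [hd]; field_simp; ring
  linarith

theorem norm_sub_le_mul_norm_sub (hL : 0 < L) (a b : E) : ‖g a - g b‖ ≤ L * ‖a - b‖ := by
  have h := (sq_norm_sub_div_le_bregman hcvx hsm hL a b).trans (hsm a b)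
  rw [div_le_iff₀ (by positivity)] at h
  exact pow_le_pow_iff_left₀ (norm_nonneg _) (by positivity) two_ne_zero |>.1 (by nlinarith)

end Smooth

theorem norm_projGrad_sub_minimizer_le {f : E → ℝ} {g : E → E} {μ L t : ℝ} (hμ : 0 < μ)
    (ht : 0 < t) (hsc : ∀ x y, μ / 2 * ‖x - y‖ ^ 2 ≤ f x - f y - ⟪g y, x - y⟫)
    (hlip : ∀ a b, ‖g a - g b‖ ≤ L * ‖a - b‖) {x xs Tx : E}
    (hopt : 0 ≤ ⟪g xs, Tx - xs⟫) (hproj : ⟪x - t • g x - Tx, xs - Tx⟫ ≤ 0) :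
    ‖Tx - xs‖ ≤ (1 / t + L) / μ * ‖x - Tx‖ := by
  set N := ‖Tx - xs‖
  have hstep : t * ⟪g x, Tx - xs⟫ ≤ ‖x - Tx‖ * N := by
    have : ⟪x - t • g x - Tx, xs - Tx⟫ = t * ⟪g x, Tx - xs⟫ - ⟪x - Tx, Tx - xs⟫ := by
      rw [show x - t • g x - Tx = (x - Tx) - t • g x by abel, ← neg_sub Tx xs, inner_neg_right,
        inner_sub_left, real_inner_smul_left]
      ring
    linarith [real_inner_le_norm (x - Tx) (Tx - xs)]
  have hgrad : ⟪g Tx - g x, Tx - xs⟫ ≤ L * ‖x - Tx‖ * N := by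
    calc ⟪g Tx - g x, Tx - xs⟫ ≤ ‖g Tx - g x‖ * N := real_inner_le_norm _ _
      _ ≤ L * ‖x - Tx‖ * N := by
        rw [norm_sub_rev x]; exact mul_le_mul_of_nonneg_right (hlip Tx x) (norm_nonneg _)
  have hsplit : ⟪g Tx - g xs, Tx - xs⟫ =
      ⟪g Tx - g x, Tx - xs⟫ + ⟪g x, Tx - xs⟫ - ⟪g xs, Tx - xs⟫ := by
    simp only [inner_sub_left]; ring
  have hkey : μ * N * N ≤ (1 / t + L) * ‖x - Tx‖ * N := by
    have : ⟪g x, Tx - xs⟫ ≤ 1 / t * (‖x - Tx‖ * N) := by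
      rw [one_div, inv_mul_eq_div, le_div_iff₀ ht]; linarith
    nlinarith [mul_sq_norm_sub_le_inner_sub hsc Tx xs]
  rcases (norm_nonneg (Tx - xs) : 0 ≤ N).eq_or_lt with hN | hN
  · have hC : 0 ≤ (1 / t + L) * ‖x - Tx‖ := by
      rw [add_mul]; exact add_nonneg (by positivity) ((norm_nonneg _).trans (hlip x Tx))
    rw [show N = 0 from hN.symm, div_mul_eq_mul_div]
    exact div_nonneg hC hμ.le
  · rw [div_mul_eq_mul_div, le_div_iff₀ hμ, mul_comm N]
    exact le_of_mul_le_mul_right hkey hN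

theorem sub_le_inner_add_of_inexact_projGrad {f : E → ℝ} {g : E → E} {L t : ℝ} (ht : 0 < t)
    (htL : L ≤ 1 / t) (hcvx : ∀ x y, 0 ≤ f x - f y - ⟪g y, x - y⟫)
    (hsm : ∀ x y, f x - f y - ⟪g y, x - y⟫ ≤ L / 2 * ‖x - y‖ ^ 2) {x xs xp gh v : E}
    (hv : t • g x = gh + v) (hproj : ⟪x - gh - xp, xs - xp⟫ ≤ 0) :
    f xp - f xs ≤ 1 / t * ⟪x - xp + v, xp - xs⟫ + 1 / (2 * t) * ‖x - xp‖ ^ 2 := by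
  have hdescent : f xp - f xs ≤ ⟪g x, xp - xs⟫ + L / 2 * ‖x - xp‖ ^ 2 := by
    have h₁ := hsm xp x
    have h₂ := hcvx xs x
    rw [norm_sub_rev] at h₁
    have : ⟪g x, xp - xs⟫ = ⟪g x, xp - x⟫ - ⟪g x, xs - x⟫ := by
      rw [← inner_sub_right, sub_sub_sub_cancel_right]
    linarith
  have hinner : ⟪g x, xp - xs⟫ ≤ 1 / t * ⟪x - xp + v, xp - xs⟫ := by
    have : ⟪x - gh - xp, xs - xp⟫ = t * ⟪g x, xp - xs⟫ - ⟪x - xp + v, xp - xs⟫ := by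
      rw [show x - gh - xp = (x - xp + v) - (gh + v) by abel, ← hv, ← neg_sub xp xs,
        inner_neg_right, inner_sub_left, real_inner_smul_left]
      ring
    rw [one_div, inv_mul_eq_div, le_div_iff₀ ht]; linarith
  have hquad : L / 2 * ‖x - xp‖ ^ 2 ≤ 1 / (2 * t) * ‖x - xp‖ ^ 2 := by
    rw [show 1 / (2 * t) = 1 / t / 2 by ring]; gcongr
  linarith

end InnerProductSpace

theorem stmt12_general {n : ℕ} (f : EuclideanSpace ℝ (Fin n) → ℝ)
    (g : EuclideanSpace ℝ (Fin n) → EuclideanSpace ℝ (Fin n))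
    (X : Set (EuclideanSpace ℝ (Fin n)))
    (hXcv : Convex ℝ X)
    (μ L t Ω δ ω Θ : ℝ) (hμ : 0 < μ) (hL : 0 < L) (ht : 0 < t) (ht' : t ≤ 1 / L)
    (hsc : ∀ x y, μ / 2 * ‖x - y‖ ^ 2 ≤ f x - f y - ⟪g y, x - y⟫)
    (hsm : ∀ x y, f x - f y - ⟪g y, x - y⟫ ≤ L / 2 * ‖x - y‖ ^ 2)
    (xs : EuclideanSpace ℝ (Fin n)) (hxsX : xs ∈ X) (hxs : ∀ y ∈ X, f xs ≤ f y)
    (x gh v xp Tx : EuclideanSpace ℝ (Fin n))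
    (hproj : IsProj X (x - gh) xp)
    (hv : t • g x = gh + v) (hvΩ : ‖v‖ ≤ Ω)
    (hTx : IsProj X (x - t • g x) Tx)
    (hδ : ‖x - Tx‖ ≤ δ) (hω : ‖xp - Tx‖ ≤ ω) (hΘ : ‖x - xp‖ ≤ Θ) :
    f xp - f xs ≤ 1 / t * ((Θ + Ω) * (ω + δ * ((1 / t + L) / μ)) + Θ ^ 2 / 2) := by
  set T' := (1 / t + L) / μ
  have hcvx : ∀ x y, 0 ≤ f x - f y - ⟪g y, x - y⟫ := fun x y =>
    (by positivity : 0 ≤ μ / 2 * ‖x - y‖ ^ 2).trans (hsc x y)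
  have hopt : 0 ≤ ⟪g xs, Tx - xs⟫ :=
    (isMinOn_iff.2 hxs).real_inner_sub_nonneg (hasFDerivAt_of_bregman_le hcvx hsm xs) hXcv hxsX
      hTx.1
  have hTxs : ‖Tx - xs‖ ≤ T' * δ :=
    (norm_projGrad_sub_minimizer_le hμ ht hsc (norm_sub_le_mul_norm_sub hcvx hsm hL) hopt
      (hTx.real_inner_sub_le_zero hXcv hxsX)).trans (by gcongr)
  have hxps : ‖xp - xs‖ ≤ ω + δ * T' := by
    linarith [norm_sub_le_norm_sub_add_norm_sub xp Tx xs, mul_comm T' δ]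
  have hxv : ‖x - xp + v‖ ≤ Θ + Ω := (norm_add_le _ _).trans (add_le_add hΘ hvΩ)
  have htL : L ≤ 1 / t := by rw [le_div_iff₀ ht, mul_comm]; exact (le_div_iff₀ hL).1 ht'
  calc f xp - f xs ≤ 1 / t * ⟪x - xp + v, xp - xs⟫ + 1 / (2 * t) * ‖x - xp‖ ^ 2 :=
        sub_le_inner_add_of_inexact_projGrad ht htL hcvx hsm hv
          (hproj.real_inner_sub_le_zero hXcv hxsX)
    _ ≤ 1 / t * (‖x - xp + v‖ * ‖xp - xs‖) + 1 / (2 * t) * Θ ^ 2 := by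
        gcongr; exact real_inner_le_norm _ _
    _ ≤ 1 / t * ((Θ + Ω) * (ω + δ * T')) + 1 / (2 * t) * Θ ^ 2 := by
        gcongr; exact (norm_nonneg _).trans hxv
    _ = 1 / t * ((Θ + Ω) * (ω + δ * T') + Θ ^ 2 / 2) := by ring

theorem stmt12 {n : ℕ} (f : EuclideanSpace ℝ (Fin n) → ℝ)
    (g : EuclideanSpace ℝ (Fin n) → EuclideanSpace ℝ (Fin n))
    (X : Set (EuclideanSpace ℝ (Fin n)))
    (hXne : X.Nonempty) (hXcl : IsClosed X) (hXcv : Convex ℝ X)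
    (μ L t Ω δ ω Θ : ℝ) (hμ : 0 < μ) (hL : 0 < L) (ht : 0 < t) (ht' : t ≤ 1 / L)
    (hsc : ∀ x y, μ / 2 * ‖x - y‖ ^ 2 ≤ f x - f y - ⟪g y, x - y⟫)
    (hsm : ∀ x y, f x - f y - ⟪g y, x - y⟫ ≤ L / 2 * ‖x - y‖ ^ 2)
    (xs : EuclideanSpace ℝ (Fin n)) (hxsX : xs ∈ X) (hxs : ∀ y ∈ X, f xs ≤ f y)
    (x gh v xp Tx : EuclideanSpace ℝ (Fin n)) (hxX : x ∈ X)
    (hproj : IsProj X (x - gh) xp)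
    (hv : t • g x = gh + v) (hvΩ : ‖v‖ ≤ Ω)
    (hTx : IsProj X (x - t • g x) Tx)
    (hδ : ‖x - Tx‖ ≤ δ) (hω : ‖xp - Tx‖ ≤ ω) (hΘ : ‖x - xp‖ ≤ Θ) :
    f xp - f xs ≤ 1 / t * ((Θ + Ω) * (ω + δ * ((1 / t + L) / μ)) + Θ ^ 2 / 2) :=
  stmt12_general f g X hXcv μ L t Ω δ ω Θ hμ hL ht ht' hsc hsm xs hxsX hxs x gh v xp Tx hproj hv hvΩ
    hTx hδ hω hΘ
end
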